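/- arXiv:2009.14498 — 5 statements merged into one kernel-verified Lean document; each statement's English description precedes it below -/
import Mathlib

section
/- Let A₀ ∈ ℝ^{r×r} be stable, Metzler, and irreducible, let μ₁ < 0 be its real eigenvalue dominating the real parts of all other eigenvalues, and let v₁, w₁ ∈ ℝ^r be entrywise positive vectors with A₀ v₁ = μ₁ v₁, w₁ᵀ A₀ = μ₁ w₁ᵀ, and w₁ᵀ v₁ = 1. Let ε > 0 satisfy μ₁ + ε ≤ 0, set Ā := A₀ − (μ₁ + ε) v₁ w₁ᵀ, and let γ > 0 satisfy −γ I_r ≤ A₀ entrywise. Then: (i) every matrix A ∈ ℝ^{r×r} with −γ I_r ≤ A ≤ Ā (entrywise) is Metzler and every complex eigenvalue λ of A satisfies Re(λ) ≤ −ε, so in particular A is stable; and (ii) A₀ itself satisfies −γ I_r ≤ A₀ ≤ Ā. -/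
/-!
Every `A` in the box is Metzler because it dominates the diagonal matrix `-γ I` off the diagonal.
The rank-one correction moves the Perron root of `A₀` to `-ε` without changing its positive left
eigenvector: `w₁ᵀ Ā = -ε w₁ᵀ`. For an eigenpair `A x = λ x`, the Metzler property gives
`Re λ |x| ≤ A |x| ≤ Ā |x|` entrywise, and pairing with `w₁ > 0` yields `Re λ ≤ -ε`.
-/

open Matrix

/-- A square real matrix is stable if every eigenvalue (as a complex matrix)
has negative real part. -/
def IsStable {r : ℕ} (A : Matrix (Fin r) (Fin r) ℝ) : Prop :=
  ∀ μ ∈ spectrum ℂ (A.map Complex.ofReal), μ.re < 0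

/-- A square real matrix is Metzler if every off-diagonal entry is nonnegative. -/
def IsMetzler {r : ℕ} (A : Matrix (Fin r) (Fin r) ℝ) : Prop :=
  ∀ i j, i ≠ j → 0 ≤ A i j

/-- A square real matrix is irreducible if the directed graph with an edge
from `i` to `j` whenever `i ≠ j` and `A i j ≠ 0` is strongly connected. -/
def IsIrreducibleMatrix {r : ℕ} (A : Matrix (Fin r) (Fin r) ℝ) : Prop :=
  ∀ i j : Fin r, Relation.ReflTransGen (fun a b => a ≠ b ∧ A a b ≠ 0) i j

/-- Entrywise order on real matrices. -/
def entryLE {m n : ℕ} (A B : Matrix (Fin m) (Fin n) ℝ) : Prop :=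
  ∀ i j, A i j ≤ B i j

lemma Matrix.exists_mulVec_eq_smul_of_mem_spectrum {K n : Type*} [Field K] [Fintype n]
    [DecidableEq n] {M : Matrix n n K} {μ : K} (h : μ ∈ spectrum K M) :
    ∃ x : n → K, x ≠ 0 ∧ M *ᵥ x = μ • x := by
  rw [← Matrix.spectrum_toLin', ← Module.End.hasEigenvalue_iff_mem_spectrum] at h
  obtain ⟨x, hx⟩ := h.exists_hasEigenvector
  exact ⟨x, hx.2, Module.End.mem_eigenspace_iff.mp hx.1⟩

lemma Matrix.mulVec_le_mulVec_of_entryLE {m n : ℕ} {A B : Matrix (Fin m) (Fin n) ℝ}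
    (hAB : entryLE A B) {y : Fin n → ℝ} (hy : 0 ≤ y) : A *ᵥ y ≤ B *ᵥ y :=
  fun i => dotProduct_le_dotProduct_of_nonneg_right (hAB i) hy

lemma Matrix.entryLE_sub_smul_vecMulVec {m n : ℕ} (A : Matrix (Fin m) (Fin n) ℝ) {c : ℝ}
    (hc : c ≤ 0) {v : Fin m → ℝ} {w : Fin n → ℝ} (hv : 0 ≤ v) (hw : 0 ≤ w) :
    entryLE A (A - c • vecMulVec v w) := fun i j => by
  simp only [sub_apply, smul_apply, vecMulVec_apply, smul_eq_mul]
  nlinarith [mul_nonneg (hv i) (hw j)]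

lemma Matrix.vecMul_sub_smul_vecMulVec {n : Type*} [Fintype n] {A : Matrix n n ℝ}
    {w v : n → ℝ} {μ : ℝ} (hw : w ᵥ* A = μ • w) (c : ℝ) :
    w ᵥ* (A - c • vecMulVec v w) = (μ - c * (w ⬝ᵥ v)) • w := by
  rw [vecMul_sub, vecMul_smul, vecMul_vecMulVec, hw, smul_smul, sub_smul]

lemma isMetzler_smul_one {r : ℕ} (c : ℝ) : IsMetzler (c • (1 : Matrix (Fin r) (Fin r) ℝ)) :=
  fun i j hij => by simp [one_apply_ne hij]

lemma IsMetzler.mono {r : ℕ} {A B : Matrix (Fin r) (Fin r) ℝ} (hA : IsMetzler A)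
    (hAB : entryLE A B) : IsMetzler B :=
  fun i j hij => (hA i j hij).trans (hAB i j)

lemma IsMetzler.re_smul_norm_le_mulVec_norm {r : ℕ} {A : Matrix (Fin r) (Fin r) ℝ}
    (hA : IsMetzler A) {lam : ℂ} {x : Fin r → ℂ}
    (hx : A.map Complex.ofReal *ᵥ x = lam • x) :
    lam.re • (fun j => ‖x j‖) ≤ A *ᵥ fun j => ‖x j‖ := by
  intro i
  have hrow : ∑ j, (A i j : ℂ) * x j = lam * x i := by
    simpa [mulVec, dotProduct] using congrFun hx i
  -- Only the diagonal entry can be negative, so it is moved to the eigenvalue's side.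
  have hsplit : (lam - A i i) * x i = ∑ j ∈ Finset.univ.erase i, (A i j : ℂ) * x j := by
    rw [← Finset.add_sum_erase _ _ (Finset.mem_univ i)] at hrow
    linear_combination -hrow
  have hoff : (lam.re - A i i) * ‖x i‖ ≤ ∑ j ∈ Finset.univ.erase i, A i j * ‖x j‖ :=
    calc (lam.re - A i i) * ‖x i‖
        ≤ ‖lam - (A i i : ℂ)‖ * ‖x i‖ := by
          gcongr
          simpa using Complex.re_le_norm (lam - A i i)
      _ = ‖∑ j ∈ Finset.univ.erase i, (A i j : ℂ) * x j‖ := by rw [← hsplit, norm_mul]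
      _ ≤ ∑ j ∈ Finset.univ.erase i, ‖(A i j : ℂ) * x j‖ := norm_sum_le _ _
      _ = ∑ j ∈ Finset.univ.erase i, A i j * ‖x j‖ := by
          refine Finset.sum_congr rfl fun j hj => ?_
          rw [norm_mul, Complex.norm_real, Real.norm_of_nonneg
            (hA i j (Finset.ne_of_mem_erase hj).symm)]
  simp only [Pi.smul_apply, smul_eq_mul, mulVec, dotProduct]
  rw [← Finset.add_sum_erase _ _ (Finset.mem_univ i)]
  linarith

lemma IsMetzler.re_le_of_entryLE_of_vecMul_eq_smul {r : ℕ} {A B : Matrix (Fin r) (Fin r) ℝ}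
    (hA : IsMetzler A) (hAB : entryLE A B) {w : Fin r → ℝ} (hw : ∀ i, 0 < w i) {c : ℝ}
    (hwB : w ᵥ* B = c • w) {lam : ℂ} (hlam : lam ∈ spectrum ℂ (A.map Complex.ofReal)) :
    lam.re ≤ c := by
  obtain ⟨x, hx0, hx⟩ := exists_mulVec_eq_smul_of_mem_spectrum hlam
  set y : Fin r → ℝ := fun j => ‖x j‖
  have hy : 0 ≤ y := fun j => norm_nonneg _
  have hwy : 0 < w ⬝ᵥ y := by
    obtain ⟨i, hi⟩ := Function.ne_iff.mp hx0
    exact Finset.sum_pos' (fun j _ => mul_nonneg (hw j).le (hy j))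
      ⟨i, Finset.mem_univ i, mul_pos (hw i) (norm_pos_iff.mpr hi)⟩
  refine le_of_mul_le_mul_right ?_ hwy
  calc lam.re * (w ⬝ᵥ y) = w ⬝ᵥ (lam.re • y) := by rw [dotProduct_smul, smul_eq_mul]
    _ ≤ w ⬝ᵥ (A *ᵥ y) := dotProduct_le_dotProduct_of_nonneg_left
        (hA.re_smul_norm_le_mulVec_norm hx) fun i => (hw i).le
    _ ≤ w ⬝ᵥ (B *ᵥ y) := dotProduct_le_dotProduct_of_nonneg_left
        (mulVec_le_mulVec_of_entryLE hAB hy) fun i => (hw i).le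
    _ = c * (w ⬝ᵥ y) := by rw [dotProduct_mulVec, hwB, smul_dotProduct, smul_eq_mul]

theorem stable_metzler_box_general {r : ℕ} (A₀ : Matrix (Fin r) (Fin r) ℝ)
    (μ₁ : ℝ)
    (v₁ w₁ : Fin r → ℝ) (hv₁ : ∀ i, 0 < v₁ i) (hw₁ : ∀ i, 0 < w₁ i)
    (hweig : Matrix.vecMul w₁ A₀ = μ₁ • w₁)
    (hnorm : w₁ ⬝ᵥ v₁ = 1)
    (ε : ℝ) (hε : 0 < ε) (hμε : μ₁ + ε ≤ 0)
    (γ : ℝ) (hγA₀ : entryLE ((-γ) • (1 : Matrix (Fin r) (Fin r) ℝ)) A₀)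
    (Abar : Matrix (Fin r) (Fin r) ℝ)
    (hAbar : Abar = A₀ - (μ₁ + ε) • Matrix.vecMulVec v₁ w₁) :
    (∀ A : Matrix (Fin r) (Fin r) ℝ,
      entryLE ((-γ) • (1 : Matrix (Fin r) (Fin r) ℝ)) A → entryLE A Abar →
        IsMetzler A ∧
        (∀ lam ∈ spectrum ℂ (A.map Complex.ofReal), lam.re ≤ -ε) ∧
        IsStable A) ∧
    entryLE ((-γ) • (1 : Matrix (Fin r) (Fin r) ℝ)) A₀ ∧ entryLE A₀ Abar := by
  have hwAbar : w₁ ᵥ* Abar = -ε • w₁ := by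
    rw [hAbar, vecMul_sub_smul_vecMulVec hweig, hnorm]
    congr 1
    ring
  refine ⟨fun A hlo hhi => ?_, hγA₀, ?_⟩
  · have hA : IsMetzler A := (isMetzler_smul_one _).mono hlo
    have hre : ∀ lam ∈ spectrum ℂ (A.map Complex.ofReal), lam.re ≤ -ε := fun _ hlam =>
      hA.re_le_of_entryLE_of_vecMul_eq_smul hhi hw₁ hwAbar hlam
    exact ⟨hA, hre, fun lam hlam => (hre lam hlam).trans_lt (neg_lt_zero.mpr hε)⟩
  · rw [hAbar]
    exact entryLE_sub_smul_vecMulVec A₀ hμε (fun i => (hv₁ i).le) fun i => (hw₁ i).le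

/-- with `Ā := A₀ − (μ₁ + ε) v₁ w₁ᵀ`, every matrix `A` with
`−γ I ≤ A ≤ Ā` entrywise is Metzler and all its eigenvalues have real part
at most `−ε` (so `A` is stable); moreover `−γ I ≤ A₀ ≤ Ā`. -/
theorem stable_metzler_box {r : ℕ} (A₀ : Matrix (Fin r) (Fin r) ℝ)
    (hstab : IsStable A₀) (hmet : IsMetzler A₀) (hirr : IsIrreducibleMatrix A₀)
    (μ₁ : ℝ) (hμ₁neg : μ₁ < 0)
    (hμ₁eig : (μ₁ : ℂ) ∈ spectrum ℂ (A₀.map Complex.ofReal))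
    (hdom : ∀ μ ∈ spectrum ℂ (A₀.map Complex.ofReal), μ ≠ (μ₁ : ℂ) → μ.re ≤ μ₁)
    (v₁ w₁ : Fin r → ℝ) (hv₁ : ∀ i, 0 < v₁ i) (hw₁ : ∀ i, 0 < w₁ i)
    (hveig : A₀.mulVec v₁ = μ₁ • v₁) (hweig : Matrix.vecMul w₁ A₀ = μ₁ • w₁)
    (hnorm : w₁ ⬝ᵥ v₁ = 1)
    (ε : ℝ) (hε : 0 < ε) (hμε : μ₁ + ε ≤ 0)
    (γ : ℝ) (hγ : 0 < γ) (hγA₀ : entryLE ((-γ) • (1 : Matrix (Fin r) (Fin r) ℝ)) A₀)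
    (Abar : Matrix (Fin r) (Fin r) ℝ)
    (hAbar : Abar = A₀ - (μ₁ + ε) • Matrix.vecMulVec v₁ w₁) :
    (∀ A : Matrix (Fin r) (Fin r) ℝ,
      entryLE ((-γ) • (1 : Matrix (Fin r) (Fin r) ℝ)) A → entryLE A Abar →
        IsMetzler A ∧
        (∀ lam ∈ spectrum ℂ (A.map Complex.ofReal), lam.re ≤ -ε) ∧
        IsStable A) ∧
    entryLE ((-γ) • (1 : Matrix (Fin r) (Fin r) ℝ)) A₀ ∧ entryLE A₀ Abar :=
  stable_metzler_box_general A₀ μ₁ v₁ w₁ hv₁ hw₁ hweig hnorm ε hε hμε γ hγA₀ Abar hAbar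
end

section
/- Let A₀ ∈ ℝ^{r×r} be stable, Metzler, and irreducible, let μ₁ < 0 be its real eigenvalue dominating the real parts of all other eigenvalues, and let v₁, w₁ ∈ ℝ^r be entrywise positive vectors with A₀ v₁ = μ₁ v₁, w₁ᵀ A₀ = μ₁ w₁ᵀ, and w₁ᵀ v₁ = 1. Let ε > 0 satisfy μ₁ + ε ≤ 0, set Ā := A₀ − (μ₁ + ε) v₁ w₁ᵀ, and let γ > 0 satisfy −γ I_r ≤ A₀ entrywise. Then the spectral radius of Ā + γ I_r equals γ − ε, i.e., ρ(Ā + γ I_r) = γ − ε. -/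
open Matrix

/-- The spectral radius of a square real matrix: the maximum modulus of its
complex eigenvalues. -/
noncomputable def specRadius {r : ℕ} (M : Matrix (Fin r) (Fin r) ℝ) : ℝ :=
  sSup ((fun μ : ℂ => ‖μ‖) '' spectrum ℂ (M.map Complex.ofReal))

/-!
`Ā + γ I` is entrywise nonnegative: `A₀ + γ I` is, since `A₀` is Metzler with diagonal at least
`-γ`, and `-(μ₁ + ε) v₁ w₁ᵀ` is, since `μ₁ + ε ≤ 0`. Because `w₁ᵀ v₁ = 1`, the deflation moves the
eigenvalue of `v₁` from `μ₁` to `-ε`, so `v₁` is a positive eigenvector of `Ā + γ I` for `γ - ε`.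
For a nonnegative matrix `M` with `M v = ρ v`, `v > 0`, every eigenvalue satisfies `|μ| ≤ ρ`:
if `M x = μ x`, evaluate at an index maximizing `|x i| / v i`.
-/

namespace Matrix

variable {n : Type*} [Fintype n]

theorem mulVec_sub_smul_vecMulVec {R : Type*} [CommRing R] {A : Matrix n n R} {v w : n → R}
    {μ : R} (c : R) (hAv : A *ᵥ v = μ • v) (hwv : w ⬝ᵥ v = 1) :
    (A - c • vecMulVec v w) *ᵥ v = (μ - c) • v := by
  rw [sub_mulVec, smul_mulVec, vecMulVec_mulVec, hAv, hwv, sub_smul]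
  simp

variable [DecidableEq n]

theorem mem_spectrum_iff_exists_mulVec_eq_smul {K : Type*} [Field K] (B : Matrix n n K) (μ : K) :
    μ ∈ spectrum K B ↔ ∃ x ≠ 0, B *ᵥ x = μ • x := by
  rw [← spectrum_toLin', ← Module.End.hasEigenvalue_iff_mem_spectrum]
  constructor
  · intro h
    obtain ⟨x, hx⟩ := h.exists_hasEigenvector
    exact ⟨x, hx.2, by simpa using hx.apply_eq_smul⟩
  · rintro ⟨x, hx0, hx⟩
    exact Module.End.hasEigenvalue_of_hasEigenvector
      ⟨Module.End.mem_eigenspace_iff.2 (by simpa using hx), hx0⟩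

theorem norm_le_of_nonneg_of_mulVec_eq_smul {M : Matrix n n ℝ} (hM : ∀ i j, 0 ≤ M i j)
    {v : n → ℝ} (hv : ∀ i, 0 < v i) {ρ : ℝ} (hMv : M *ᵥ v = ρ • v)
    {μ : ℂ} (hμ : μ ∈ spectrum ℂ (M.map Complex.ofReal)) : ‖μ‖ ≤ ρ := by
  obtain ⟨x, hx0, hx⟩ := (mem_spectrum_iff_exists_mulVec_eq_smul _ μ).1 hμ
  obtain ⟨k, hk⟩ := Function.ne_iff.1 hx0
  obtain ⟨i, -, hi⟩ := Finset.exists_max_image Finset.univ (fun j => ‖x j‖ / v j) ⟨k, by simp⟩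
  set t := ‖x i‖ / v i
  have hxt : ∀ j, ‖x j‖ ≤ t * v j := fun j => (div_le_iff₀ (hv j)).1 (hi j (Finset.mem_univ j))
  have hxi : ‖x i‖ = t * v i := by simp [t, (hv i).ne']
  have ht : 0 < t := pos_of_mul_pos_left ((norm_pos_iff.2 hk).trans_le (hxt k)) (hv k).le
  have hrow : ‖μ‖ * ‖x i‖ ≤ ρ * ‖x i‖ := calc
    ‖μ‖ * ‖x i‖ = ‖∑ j, (M i j : ℂ) * x j‖ := by
      rw [← norm_mul, ← smul_eq_mul, ← Pi.smul_apply, ← hx]; rfl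
    _ ≤ ∑ j, M i j * ‖x j‖ := norm_sum_le_of_le _ fun j _ => by
      rw [norm_mul, Complex.norm_real, Real.norm_of_nonneg (hM i j)]
    _ ≤ ∑ j, M i j * (t * v j) :=
      Finset.sum_le_sum fun j _ => mul_le_mul_of_nonneg_left (hxt j) (hM i j)
    _ = t * (M *ᵥ v) i := by
      simp only [mulVec, dotProduct, Finset.mul_sum]
      exact Finset.sum_congr rfl fun j _ => by ring
    _ = ρ * ‖x i‖ := by rw [hMv, hxi, Pi.smul_apply, smul_eq_mul]; ring
  exact le_of_mul_le_mul_right hrow (hxi ▸ mul_pos ht (hv i))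

theorem specRadius_eq_of_nonneg_of_mulVec_eq_smul {r : ℕ} [Nonempty (Fin r)]
    {M : Matrix (Fin r) (Fin r) ℝ} (hM : ∀ i j, 0 ≤ M i j) {v : Fin r → ℝ} (hv : ∀ i, 0 < v i)
    {ρ : ℝ} (hMv : M *ᵥ v = ρ • v) : specRadius M = ρ := by
  have hρ : (ρ : ℂ) ∈ spectrum ℂ (M.map Complex.ofReal) := by
    refine (mem_spectrum_iff_exists_mulVec_eq_smul _ _).2
      ⟨Complex.ofReal ∘ v, fun h => ?_, funext fun i => ?_⟩
    · obtain ⟨i⟩ := ‹Nonempty (Fin r)›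
      exact (hv i).ne' (Complex.ofReal_eq_zero.1 (congrFun h i))
    · exact (Complex.ofRealHom.map_mulVec M v i).symm.trans (by simp [hMv])
  have hle : ∀ μ ∈ spectrum ℂ (M.map Complex.ofReal), ‖μ‖ ≤ ρ := fun μ hμ =>
    norm_le_of_nonneg_of_mulVec_eq_smul hM hv hMv hμ
  have hρ0 : 0 ≤ ρ := (norm_nonneg _).trans (hle _ hρ)
  refine IsGreatest.csSup_eq ⟨⟨ρ, hρ, by simp [abs_of_nonneg hρ0]⟩, ?_⟩
  rintro _ ⟨μ, hμ, rfl⟩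
  exact hle μ hμ

end Matrix

theorem IsMetzler.nonneg_add_smul_one {r : ℕ} {A : Matrix (Fin r) (Fin r) ℝ} (hA : IsMetzler A)
    {γ : ℝ} (hγA : entryLE ((-γ) • (1 : Matrix (Fin r) (Fin r) ℝ)) A) (i j : Fin r) :
    0 ≤ (A + γ • (1 : Matrix (Fin r) (Fin r) ℝ)) i j := by
  rcases eq_or_ne i j with rfl | hij
  · simpa [add_comm, ← sub_eq_add_neg, neg_le_iff_add_nonneg] using hγA i i
  · simpa [one_apply_ne hij] using hA i j hij

theorem specRadius_shifted_Abar_general {r : ℕ} (A₀ : Matrix (Fin r) (Fin r) ℝ)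
    (hmet : IsMetzler A₀)
    (μ₁ : ℝ)
    (v₁ w₁ : Fin r → ℝ) (hv₁ : ∀ i, 0 < v₁ i) (hw₁ : ∀ i, 0 < w₁ i)
    (hveig : A₀.mulVec v₁ = μ₁ • v₁)
    (hnorm : w₁ ⬝ᵥ v₁ = 1)
    (ε : ℝ) (hμε : μ₁ + ε ≤ 0)
    (γ : ℝ) (hγA₀ : entryLE ((-γ) • (1 : Matrix (Fin r) (Fin r) ℝ)) A₀)
    (Abar : Matrix (Fin r) (Fin r) ℝ)
    (hAbar : Abar = A₀ - (μ₁ + ε) • Matrix.vecMulVec v₁ w₁) :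
    specRadius (Abar + γ • (1 : Matrix (Fin r) (Fin r) ℝ)) = γ - ε := by
  have : Nonempty (Fin r) := by
    by_contra h
    rw [not_nonempty_iff] at h
    simp [dotProduct] at hnorm
  have hM : ∀ i j, 0 ≤ (Abar + γ • (1 : Matrix (Fin r) (Fin r) ℝ)) i j := by
    intro i j
    have hshift := hmet.nonneg_add_smul_one hγA₀ i j
    have hrank1 : 0 ≤ -(μ₁ + ε) * (v₁ i * w₁ j) :=
      mul_nonneg (by linarith) (mul_pos (hv₁ i) (hw₁ j)).le
    simp only [hAbar, Matrix.add_apply, Matrix.sub_apply, Matrix.smul_apply, vecMulVec_apply,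
      smul_eq_mul] at hshift ⊢
    linarith
  have hMv : (Abar + γ • (1 : Matrix (Fin r) (Fin r) ℝ)) *ᵥ v₁ = (γ - ε) • v₁ := by
    rw [add_mulVec, hAbar, mulVec_sub_smul_vecMulVec _ hveig hnorm, smul_mulVec, one_mulVec]
    module
  exact specRadius_eq_of_nonneg_of_mulVec_eq_smul hM hv₁ hMv

/-- with `Ā := A₀ − (μ₁ + ε) v₁ w₁ᵀ`, the spectral radius of
`Ā + γ I` equals `γ − ε`. -/
theorem specRadius_shifted_Abar {r : ℕ} (A₀ : Matrix (Fin r) (Fin r) ℝ)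
    (hstab : IsStable A₀) (hmet : IsMetzler A₀) (hirr : IsIrreducibleMatrix A₀)
    (μ₁ : ℝ) (hμ₁neg : μ₁ < 0)
    (hμ₁eig : (μ₁ : ℂ) ∈ spectrum ℂ (A₀.map Complex.ofReal))
    (hdom : ∀ μ ∈ spectrum ℂ (A₀.map Complex.ofReal), μ ≠ (μ₁ : ℂ) → μ.re ≤ μ₁)
    (v₁ w₁ : Fin r → ℝ) (hv₁ : ∀ i, 0 < v₁ i) (hw₁ : ∀ i, 0 < w₁ i)
    (hveig : A₀.mulVec v₁ = μ₁ • v₁) (hweig : Matrix.vecMul w₁ A₀ = μ₁ • w₁)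
    (hnorm : w₁ ⬝ᵥ v₁ = 1)
    (ε : ℝ) (hε : 0 < ε) (hμε : μ₁ + ε ≤ 0)
    (γ : ℝ) (hγ : 0 < γ) (hγA₀ : entryLE ((-γ) • (1 : Matrix (Fin r) (Fin r) ℝ)) A₀)
    (Abar : Matrix (Fin r) (Fin r) ℝ)
    (hAbar : Abar = A₀ - (μ₁ + ε) • Matrix.vecMulVec v₁ w₁) :
    specRadius (Abar + γ • (1 : Matrix (Fin r) (Fin r) ℝ)) = γ - ε :=
  specRadius_shifted_Abar_general A₀ hmet μ₁ v₁ w₁ hv₁ hw₁ hveig hnorm ε hμε γ hγA₀ Abar hAbar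
end

section
/- Let A ∈ ℝ^{r×r} be Metzler and let γ ∈ ℝ be such that A + γ I_r is entrywise nonnegative. Then μ := ρ(A + γ I_r) − γ is a (real) eigenvalue of A, and every complex eigenvalue λ of A satisfies Re(λ) ≤ μ. -/
open Matrix

/-!
Shifting by `γ` reduces everything to the nonnegative matrix `N = A + γ I`, and the second claim
to `Re λ + γ ≤ |λ + γ| ≤ ρ(N)`. The first claim is the Perron part of the Perron–Frobenius
theorem: `ρ(N)` is an eigenvalue of `N`.

For `t > ρ(N)`, Gelfand's formula gives `‖(N/t)^k‖ < 1` for some `k`, so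
`(t - N)⁻¹ = t⁻¹ (∑_{i<k} (N/t)^i) ∑_q (N/t)^{kq}` is entrywise nonnegative. If `ρ = ρ(N)` were
not an eigenvalue, `(ρ - N)⁻¹` would be the limit of these as `t → ρ⁺`, hence nonnegative as
well. But if `N v = λ v` with `|λ| = ρ` and `v ≠ 0`, the triangle inequality gives `ρ |v| ≤ N |v|`
for the entrywise modulus `|v|`, so `|v| = -(ρ - N)⁻¹ (N - ρ) |v| ≤ 0`, a contradiction.
-/

open Filter Topology

theorem spectrum.exists_norm_pow_lt_of_spectralRadius_lt {A : Type*} [NormedRing A]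
    [NormedAlgebra ℂ A] [CompleteSpace A] {a : A} {t : ℝ}
    (h : spectralRadius ℂ a < ENNReal.ofReal t) : ∃ k, 0 < k ∧ ‖a ^ k‖ < t ^ k := by
  obtain ⟨k, hk, hk1⟩ := (((pow_nnnorm_pow_one_div_tendsto_nhds_spectralRadius a).eventually
    (gt_mem_nhds h)).and (eventually_ge_atTop 1)).exists
  have hkpos : (0 : ℝ) < k := by exact_mod_cast hk1
  have ht : 0 < t := ENNReal.ofReal_pos.mp (h.trans_le' zero_le)
  rw [one_div, ENNReal.rpow_inv_lt_iff hkpos, ENNReal.rpow_natCast, ← ENNReal.ofReal_pow ht.le,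
    ← enorm_eq_nnnorm, ← ofReal_norm, ENNReal.ofReal_lt_ofReal_iff (by positivity)] at hk
  exact ⟨k, hk1, hk⟩

namespace Matrix

variable {m n p R : Type*}

def EntrywiseNonneg [Zero R] [LE R] (M : Matrix m n R) : Prop := ∀ i j, 0 ≤ M i j

namespace EntrywiseNonneg

theorem of_tendsto [Zero R] [Preorder R] [TopologicalSpace R] [OrderClosedTopology R]
    {α : Type*} {l : Filter α} [l.NeBot] {f : α → Matrix m n R} {M : Matrix m n R}
    (h : Tendsto f l (𝓝 M)) (hf : ∀ᶠ a in l, EntrywiseNonneg (f a)) : EntrywiseNonneg M :=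
  fun i j => ge_of_tendsto
    (((continuous_apply j).comp (continuous_apply i)).continuousAt.tendsto.comp h)
    (hf.mono fun _ ha => ha i j)

section OrderedAddCommMonoid

variable [AddCommMonoid R] [PartialOrder R] [IsOrderedAddMonoid R]

theorem sum {ι : Type*} {s : Finset ι} {M : ι → Matrix m n R}
    (h : ∀ i ∈ s, EntrywiseNonneg (M i)) : EntrywiseNonneg (∑ i ∈ s, M i) := fun a b => by
  rw [sum_apply]; exact Finset.sum_nonneg fun i hi => h i hi a b

theorem tsum [TopologicalSpace R] [OrderClosedTopology R] {ι : Type*} {f : ι → Matrix m n R}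
    (hf : ∀ i, EntrywiseNonneg (f i)) : EntrywiseNonneg (∑' i, f i) := by
  by_cases hs : Summable f
  · exact of_tendsto hs.hasSum (.of_forall fun s => sum fun i _ => hf i)
  · rw [tsum_eq_zero_of_not_summable hs]
    exact fun _ _ => le_rfl

end OrderedAddCommMonoid

section OrderedSemiring

variable [Semiring R] [PartialOrder R] [IsOrderedRing R]

theorem one [DecidableEq n] : EntrywiseNonneg (1 : Matrix n n R) := fun i j => by
  by_cases h : i = j <;> simp [one_apply, h]

theorem mul [Fintype n] {M : Matrix m n R} {N : Matrix n p R} (hM : EntrywiseNonneg M)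
    (hN : EntrywiseNonneg N) : EntrywiseNonneg (M * N) :=
  fun i k => Finset.sum_nonneg fun j _ => mul_nonneg (hM i j) (hN j k)

theorem pow [Fintype n] [DecidableEq n] {M : Matrix n n R} (hM : EntrywiseNonneg M) (k : ℕ) :
    EntrywiseNonneg (M ^ k) := by
  induction k with
  | zero => simpa using one
  | succ k ih => rw [pow_succ]; exact ih.mul hM

theorem smul {c : R} (hc : 0 ≤ c) {M : Matrix m n R} (hM : EntrywiseNonneg M) :
    EntrywiseNonneg (c • M) := fun i j => mul_nonneg hc (hM i j)

theorem mulVec_nonneg [Fintype n] {M : Matrix m n R} (hM : EntrywiseNonneg M) {v : n → R}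
    (hv : 0 ≤ v) : 0 ≤ M *ᵥ v :=
  fun i => Finset.sum_nonneg fun j _ => mul_nonneg (hM i j) (hv j)

end OrderedSemiring

section Real

variable [Fintype n]

theorem norm_smul_le_mulVec_norm {N : Matrix n n ℝ} (hN : EntrywiseNonneg N) {v : n → ℂ}
    {μ : ℂ} (hv : N.map Complex.ofReal *ᵥ v = μ • v) :
    ‖μ‖ • (fun i => ‖v i‖) ≤ N *ᵥ fun i => ‖v i‖ := fun i => calc
  ‖μ‖ * ‖v i‖ = ‖∑ j, (N i j : ℂ) * v j‖ := by
    rw [← norm_mul, ← smul_eq_mul, ← Pi.smul_apply, ← hv]; rfl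
  _ ≤ ∑ j, ‖(N i j : ℂ) * v j‖ := norm_sum_le _ _
  _ = (N *ᵥ fun i => ‖v i‖) i := by
    simp only [norm_mul, Complex.norm_real, Real.norm_of_nonneg (hN _ _)]; rfl

-- Any Banach-algebra norm would do; the Frobenius norm is preserved by `map Complex.ofReal`.
attribute [local instance] frobeniusNormedAddCommGroup frobeniusNormedRing frobeniusNormedAlgebra

variable [DecidableEq n]

theorem inv_smul_one_sub_of_spectralRadius_lt {N : Matrix n n ℝ} (hN : EntrywiseNonneg N)
    {t : ℝ} (ht : spectralRadius ℂ (N.map Complex.ofReal) < ENNReal.ofReal t) :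
    EntrywiseNonneg (t • 1 - N)⁻¹ := by
  have ht0 : 0 < t := ENNReal.ofReal_pos.mp (ht.trans_le' zero_le)
  obtain ⟨k, -, hk⟩ := spectrum.exists_norm_pow_lt_of_spectralRadius_lt ht
  set x := t⁻¹ • N
  have hxk : ‖x ^ k‖ < 1 := calc
    ‖x ^ k‖ = t⁻¹ ^ k * ‖(N ^ k).map Complex.ofReal‖ := by
      rw [smul_pow, norm_smul, frobenius_norm_map_eq _ _ Complex.norm_real, norm_pow, norm_inv,
        Real.norm_of_nonneg ht0.le]
    _ = t⁻¹ ^ k * ‖N.map Complex.ofReal ^ k‖ := by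
      congr 2; exact Matrix.map_pow N Complex.ofRealHom k
    _ < t⁻¹ ^ k * t ^ k := by gcongr
    _ = 1 := by rw [← mul_pow, inv_mul_cancel₀ ht0.ne', one_pow]
  -- `(1 - x) * ∑_{i<k} x ^ i = 1 - x ^ k`, which the geometric series in `x ^ k` inverts.
  set S := (∑ i ∈ Finset.range k, x ^ i) * ∑' q, (x ^ k) ^ q
  have hS : (t • 1 - N) * (t⁻¹ • S) = 1 := by
    have : t • 1 - N = t • (1 - x) := by simp [x, smul_sub, smul_smul, ht0.ne']
    rw [this, smul_mul_smul_comm, mul_inv_cancel₀ ht0.ne', one_smul, ← mul_assoc, mul_neg_geom_sum]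
    exact mul_neg_geom_series _ hxk
  have hx : EntrywiseNonneg x := hN.smul (inv_nonneg.2 ht0.le)
  rw [inv_eq_right_inv hS]
  exact ((sum fun i _ => hx.pow i).mul (tsum fun q => (hx.pow k).pow q)).smul (inv_nonneg.2 ht0.le)

end Real

end EntrywiseNonneg

variable [Fintype n] [DecidableEq n]

theorem mem_spectrum_of_smul_le_mulVec {N : Matrix n n ℝ} {ρ : ℝ}
    (hres : ∀ t > ρ, EntrywiseNonneg (t • 1 - N)⁻¹) {y : n → ℝ} (hy : 0 ≤ y) (hy0 : y ≠ 0)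
    (hle : ρ • y ≤ N *ᵥ y) : ρ ∈ spectrum ℝ N := by
  by_contra hρ
  have hunit : IsUnit (ρ • 1 - N).det := by
    rwa [spectrum.mem_iff, not_not, Algebra.algebraMap_eq_smul_one, isUnit_iff_isUnit_det] at hρ
  have hlim : Tendsto (fun t : ℝ => (t • 1 - N)⁻¹) (𝓝[>] ρ) (𝓝 (ρ • 1 - N)⁻¹) := by
    have hdet : ContinuousAt Ring.inverse (ρ • 1 - N).det := by
      simpa [Ring.inverse_eq_inv'] using continuousAt_inv₀ hunit.ne_zero
    have hsub : ContinuousAt (fun t : ℝ => t • (1 : Matrix n n ℝ) - N) ρ := by fun_prop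
    exact ((continuousAt_matrix_inv _ hdet).comp (x := ρ) hsub).tendsto.mono_left nhdsWithin_le_nhds
  have hR : EntrywiseNonneg (ρ • 1 - N)⁻¹ :=
    EntrywiseNonneg.of_tendsto hlim (eventually_nhdsWithin_of_forall hres)
  have hneg : 0 ≤ -y := calc
    0 ≤ (ρ • 1 - N)⁻¹ *ᵥ (N *ᵥ y - ρ • y) := hR.mulVec_nonneg (sub_nonneg.2 hle)
    _ = -y := by
      rw [show N *ᵥ y - ρ • y = -((ρ • 1 - N) *ᵥ y) by
          rw [sub_mulVec, smul_mulVec, one_mulVec, neg_sub],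
        mulVec_neg, mulVec_mulVec, nonsing_inv_mul _ hunit, one_mulVec]
  exact hy0 (le_antisymm (neg_nonneg.1 hneg) hy)

theorem exists_mulVec_eq_smul_of_mem_spectrum_s3 {K : Type*} [Field K] {M : Matrix n n K} {μ : K}
    (hμ : μ ∈ spectrum K M) : ∃ v ≠ 0, M *ᵥ v = μ • v := by
  rw [spectrum.mem_iff, isUnit_iff_isUnit_det, isUnit_iff_ne_zero, not_not,
    ← exists_mulVec_eq_zero_iff] at hμ
  obtain ⟨v, hv0, hv⟩ := hμ
  refine ⟨v, hv0, ?_⟩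
  rw [sub_mulVec, Algebra.algebraMap_eq_smul_one, smul_mulVec, one_mulVec, sub_eq_zero] at hv
  exact hv.symm

theorem ofReal_mem_spectrum_map_iff {M : Matrix n n ℝ} {a : ℝ} :
    (a : ℂ) ∈ spectrum ℂ (M.map Complex.ofReal) ↔ a ∈ spectrum ℝ M := by
  rw [mem_spectrum_iff_isRoot_charpoly, mem_spectrum_iff_isRoot_charpoly,
    ← Polynomial.isRoot_map_iff (f := Complex.ofRealHom) Complex.ofReal_injective]
  exact Iff.of_eq (congrArg (Polynomial.IsRoot · _) (charpoly_map M Complex.ofRealHom))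

end Matrix

section specRadius

variable {r : ℕ}

theorem specRadius_nonneg (M : Matrix (Fin r) (Fin r) ℝ) : 0 ≤ specRadius M :=
  Real.sSup_nonneg fun _ ⟨z, _, hz⟩ => hz ▸ norm_nonneg z

theorem norm_le_specRadius {M : Matrix (Fin r) (Fin r) ℝ} {z : ℂ}
    (hz : z ∈ spectrum ℂ (M.map Complex.ofReal)) : ‖z‖ ≤ specRadius M :=
  le_csSup ((Matrix.finite_spectrum _).image _).bddAbove ⟨z, hz, rfl⟩

theorem spectralRadius_map_ofReal_le_specRadius (M : Matrix (Fin r) (Fin r) ℝ) :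
    spectralRadius ℂ (M.map Complex.ofReal) ≤ ENNReal.ofReal (specRadius M) :=
  iSup₂_le fun _ hz => by
    rw [← enorm_eq_nnnorm, ← ofReal_norm]
    exact ENNReal.ofReal_le_ofReal (norm_le_specRadius hz)

theorem exists_mem_spectrum_norm_eq_specRadius (hr : 0 < r) (M : Matrix (Fin r) (Fin r) ℝ) :
    ∃ z ∈ spectrum ℂ (M.map Complex.ofReal), ‖z‖ = specRadius M := by
  have : Nonempty (Fin r) := ⟨⟨0, hr⟩⟩
  exact ((spectrum.nonempty_of_isAlgClosed_of_finiteDimensional ℂ _).image _).csSup_mem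
    ((Matrix.finite_spectrum _).image _)

theorem Matrix.EntrywiseNonneg.specRadius_mem_spectrum (hr : 0 < r)
    {N : Matrix (Fin r) (Fin r) ℝ} (hN : N.EntrywiseNonneg) :
    (specRadius N : ℂ) ∈ spectrum ℂ (N.map Complex.ofReal) := by
  obtain ⟨μ, hμ, hμρ⟩ := exists_mem_spectrum_norm_eq_specRadius hr N
  obtain ⟨v, hv0, hv⟩ := Matrix.exists_mulVec_eq_smul_of_mem_spectrum_s3 hμ
  rw [Matrix.ofReal_mem_spectrum_map_iff]
  refine Matrix.mem_spectrum_of_smul_le_mulVec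
    (fun t ht => hN.inv_smul_one_sub_of_spectralRadius_lt ?_) (fun i => norm_nonneg (v i)) ?_
    (hμρ ▸ hN.norm_smul_le_mulVec_norm hv)
  · exact (spectralRadius_map_ofReal_le_specRadius N).trans_lt
      ((ENNReal.ofReal_lt_ofReal_iff ((specRadius_nonneg N).trans_lt ht)).2 ht)
  · contrapose! hv0
    ext i
    simpa using congr_fun hv0 i

end specRadius

theorem metzler_dominant_eigenvalue_general {r : ℕ} (hr : 0 < r)
    (A : Matrix (Fin r) (Fin r) ℝ) (γ : ℝ)
    (hnonneg : ∀ i j, 0 ≤ (A + γ • (1 : Matrix (Fin r) (Fin r) ℝ)) i j) :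
    ((specRadius (A + γ • (1 : Matrix (Fin r) (Fin r) ℝ)) - γ : ℝ) : ℂ) ∈
        spectrum ℂ (A.map Complex.ofReal) ∧
      ∀ lam ∈ spectrum ℂ (A.map Complex.ofReal),
        lam.re ≤ specRadius (A + γ • (1 : Matrix (Fin r) (Fin r) ℝ)) - γ := by
  set N := A + γ • (1 : Matrix (Fin r) (Fin r) ℝ)
  have hmap : N.map Complex.ofReal = algebraMap ℂ _ (γ : ℂ) + A.map Complex.ofReal := by
    ext i j
    by_cases h : i = j <;> simp [N, h, one_apply, algebraMap_matrix_apply, add_comm]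
  have hshift (z : ℂ) : z ∈ spectrum ℂ (A.map Complex.ofReal) ↔
      z + γ ∈ spectrum ℂ (N.map Complex.ofReal) := by
    rw [hmap, spectrum.add_mem_add_iff]
  refine ⟨?_, fun lam hlam => ?_⟩
  · rw [hshift]
    simpa using Matrix.EntrywiseNonneg.specRadius_mem_spectrum hr hnonneg
  · have := (Complex.re_le_norm _).trans (norm_le_specRadius ((hshift lam).1 hlam))
    simp only [Complex.add_re, Complex.ofReal_re] at this
    linarith

/-- if `A` is Metzler and `A + γ I` is entrywise nonnegative, then
`μ := ρ(A + γ I) − γ` is a real eigenvalue of `A` and every complex eigenvalue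
`λ` of `A` satisfies `Re λ ≤ μ`. -/
theorem metzler_dominant_eigenvalue {r : ℕ} (hr : 0 < r)
    (A : Matrix (Fin r) (Fin r) ℝ) (γ : ℝ)
    (hmet : IsMetzler A)
    (hnonneg : ∀ i j, 0 ≤ (A + γ • (1 : Matrix (Fin r) (Fin r) ℝ)) i j) :
    ((specRadius (A + γ • (1 : Matrix (Fin r) (Fin r) ℝ)) - γ : ℝ) : ℂ) ∈
        spectrum ℂ (A.map Complex.ofReal) ∧
      ∀ lam ∈ spectrum ℂ (A.map Complex.ofReal),
        lam.re ≤ specRadius (A + γ • (1 : Matrix (Fin r) (Fin r) ℝ)) - γ :=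
  metzler_dominant_eigenvalue_general hr A γ hnonneg
end

section
/- Let A ∈ ℝ^{n×n} be stable, B ∈ ℝ^{n×m}, C ∈ ℝ^{p×n}, and let S ⊆ ℝ^{r×r} be a nonempty compact set every element of which is stable. Then there exist constants c₁ > 0 and c₂ > 0 with the following property: for all A₁, A₂ ∈ S, all B_r ∈ ℝ^{r×m}, and all C_r ∈ ℝ^{p×r}, if for i = 1, 2 the matrices X_i, Y_i ∈ ℝ^{n×r} and P_i, Q_i ∈ ℝ^{r×r} satisfy A X_i + X_i A_iᵀ + B B_rᵀ = 0, Aᵀ Y_i + Y_i A_i − Cᵀ C_r = 0, A_i P_i + P_i A_iᵀ + B_r B_rᵀ = 0, and A_iᵀ Q_i + Q_i A_i + C_rᵀ C_r = 0, then ‖(Q₁ P₁ + Y₁ᵀ X₁) − (Q₂ P₂ + Y₂ᵀ X₂)‖_F ≤ (c₁ + c₂ ‖B_r‖_F ‖C_r‖_F) ‖B_r‖_F ‖C_r‖_F ‖A₁ − A₂‖_F. -/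
open Matrix

/-- The Frobenius norm of a real matrix. -/
noncomputable def frobNorm {m n : ℕ} (M : Matrix (Fin m) (Fin n) ℝ) : ℝ :=
  Real.sqrt (Matrix.trace (Mᵀ * M))

/-! Each of `X, Y, P, Q` solves a Sylvester equation `G Z + Z F + R = 0` whose coefficients are
among `A, Aᵀ, A_r, A_rᵀ`, all stable. Then `G` and `-F` have disjoint spectra, so the Sylvester
operator `Z ↦ G Z + Z F` is invertible, and by continuity of inversion its inverse is bounded
uniformly over the compact set `S`. Subtracting the equations for `A₁` and `A₂`, the difference of
two solutions solves a Sylvester equation with right-hand side `O(‖Z‖ ‖A₁ - A₂‖)`. Writing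
`U₁V₁ - U₂V₂ = U₁(V₁ - V₂) + (U₁ - U₂)V₂` for `QP` and for `YᵀX` (where `Yᵀ` solves an equation of
the same shape as `Q`) then bounds the gradient difference: the `YᵀX` part is bilinear in
`(B_r, C_r)` and the `QP` part is quadratic in each. -/

open Polynomial

namespace Matrix

variable {K : Type*} [Field K] {m n : Type*} [Fintype m] [DecidableEq m] [Fintype n]
  [DecidableEq n]

theorem spectrum_transpose (M : Matrix m m K) : spectrum K Mᵀ = spectrum K M := by
  ext μ
  simp only [mem_spectrum_iff_isRoot_charpoly, charpoly_transpose]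

theorem aeval_mul_eq_mul_aeval {G : Matrix m m K} {N : Matrix n n K} {X : Matrix m n K}
    (h : G * X = X * N) (p : K[X]) : aeval G p * X = X * aeval N p := by
  have hpow : ∀ k : ℕ, G ^ k * X = X * N ^ k := by
    intro k
    induction k with
    | zero => simp
    | succ k ih =>
      rw [pow_succ, Matrix.mul_assoc, h, ← Matrix.mul_assoc, ih, Matrix.mul_assoc, pow_succ]
  simp only [aeval_eq_sum_range, Matrix.sum_mul, Matrix.mul_sum, Matrix.smul_mul,
    Matrix.mul_smul, hpow]

theorem eq_zero_of_mul_eq_mul_of_disjoint_spectrum [IsAlgClosed K] {G : Matrix m m K}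
    {N : Matrix n n K} (hGN : Disjoint (spectrum K G) (spectrum K N)) {X : Matrix m n K}
    (h : G * X = X * N) : X = 0 := by
  cases isEmpty_or_nonempty m with
  | inl _ => exact Subsingleton.elim _ _
  | inr _ =>
  -- By spectral mapping, the spectrum of `χ_G(N)` is `χ_G(σ(N))`, which avoids `0`.
  have hunit : IsUnit (aeval N G.charpoly) := by
    rw [← spectrum.zero_notMem_iff K, spectrum.map_polynomial_aeval_of_degree_pos N _
      (by rw [charpoly_degree_eq_dim]; exact_mod_cast Fintype.card_pos)]
    rintro ⟨μ, hμN, hμG⟩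
    exact Set.disjoint_right.mp hGN hμN (mem_spectrum_iff_isRoot_charpoly.mpr hμG)
  have hkill : X * aeval N G.charpoly = 0 := by
    rw [← aeval_mul_eq_mul_aeval h, aeval_self_charpoly, Matrix.zero_mul]
  obtain ⟨u, hu⟩ := hunit
  simpa only [← hu, Matrix.mul_assoc, Units.mul_inv, Matrix.mul_one, Matrix.zero_mul] using
    congrArg (· * (↑u⁻¹ : Matrix n n K)) hkill

end Matrix

section Stable

variable {a b : ℕ}

theorem IsStable.transpose {G : Matrix (Fin a) (Fin a) ℝ} (hG : IsStable G) : IsStable Gᵀ := by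
  intro μ hμ
  rw [transpose_map, spectrum_transpose] at hμ
  exact hG μ hμ

theorem IsStable.eq_zero_of_mul_add_mul_eq_zero {G : Matrix (Fin a) (Fin a) ℝ}
    {F : Matrix (Fin b) (Fin b) ℝ} (hG : IsStable G) (hF : IsStable F)
    {X : Matrix (Fin a) (Fin b) ℝ} (h : G * X + X * F = 0) : X = 0 := by
  have hsemiconj : G.map Complex.ofReal * X.map Complex.ofReal =
      X.map Complex.ofReal * -F.map Complex.ofReal := by
    rw [Matrix.mul_neg, eq_neg_iff_add_eq_zero]
    have h' := congrArg (·.map Complex.ofRealHom) h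
    simp only [Matrix.map_add _ (map_add Complex.ofRealHom), Matrix.map_mul,
      Matrix.map_zero _ (map_zero Complex.ofRealHom)] at h'
    exact h'
  have hdisj : Disjoint (spectrum ℂ (G.map Complex.ofReal))
      (spectrum ℂ (-F.map Complex.ofReal)) := by
    rw [← spectrum.neg_eq, Set.disjoint_left]
    exact fun μ hμG hμF => lt_asymm (hG μ hμG) (by simpa using hF (-μ) hμF)
  exact Matrix.map_injective Complex.ofReal_injective
    (by simpa using eq_zero_of_mul_eq_mul_of_disjoint_spectrum hdisj hsemiconj)

end Stable

attribute [local instance] Matrix.frobeniusNormedAddCommGroup Matrix.frobeniusNormedSpace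

theorem frobNorm_eq_norm {m n : ℕ} (M : Matrix (Fin m) (Fin n) ℝ) : frobNorm M = ‖M‖ := by
  rw [frobNorm, frobenius_norm_def, ← Real.sqrt_eq_rpow, trace, Finset.sum_comm]
  simp [mul_apply, sq]

section Frobenius

variable {l m n : Type*} [Fintype l] [Fintype m] [Fintype n]

theorem lipschitzWith_transpose : LipschitzWith 1 (transpose : Matrix m n ℝ → Matrix n m ℝ) :=
  LipschitzWith.of_dist_le_mul fun M N => by
    rw [dist_eq_norm, dist_eq_norm, ← transpose_sub, frobenius_norm_transpose, NNReal.coe_one,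
      one_mul]

theorem frobenius_norm_mul_transpose_le (M : Matrix l n ℝ) (N : Matrix m n ℝ) :
    ‖M * Nᵀ‖ ≤ ‖M‖ * ‖N‖ :=
  (frobenius_norm_mul M Nᵀ).trans_eq (by rw [frobenius_norm_transpose])

theorem frobenius_norm_transpose_mul_le (M : Matrix l m ℝ) (N : Matrix l n ℝ) :
    ‖Mᵀ * N‖ ≤ ‖M‖ * ‖N‖ :=
  (frobenius_norm_mul Mᵀ N).trans_eq (by rw [frobenius_norm_transpose])

end Frobenius

theorem transpose_sylvester_eq_zero {m n : Type*} [Fintype m] [Fintype n]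
    {G : Matrix m m ℝ} {F : Matrix n n ℝ} {X R : Matrix m n ℝ}
    (h : Gᵀ * X + X * F - R = 0) : Fᵀ * Xᵀ + Xᵀ * G + -Rᵀ = 0 := by
  simpa [transpose_add, transpose_mul, sub_eq_add_neg, add_comm] using congrArg transpose h

theorem IsCompact.exists_norm_le_mul_norm_apply {𝕜 E α : Type*} [NontriviallyNormedField 𝕜]
    [NormedAddCommGroup E] [NormedSpace 𝕜 E] [CompleteSpace E] [TopologicalSpace α] {S : Set α}
    (hS : IsCompact S) {T : α → E →L[𝕜] E} (hT : ContinuousOn T S)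
    (hunit : ∀ a ∈ S, IsUnit (T a)) :
    ∃ K, 0 ≤ K ∧ ∀ a ∈ S, ∀ x, ‖x‖ ≤ K * ‖T a x‖ := by
  have hcont : ContinuousOn (fun a => ‖Ring.inverse (T a)‖) S := fun a ha =>
    ((show ContinuousAt Ring.inverse (T a) from
      NormedRing.inverse_continuousAt (hunit a ha).unit).comp_continuousWithinAt (hT a ha)).norm
  obtain ⟨K, hK⟩ := hS.exists_bound_of_continuousOn hcont
  refine ⟨max K 0, le_max_right _ _, fun a ha x => ?_⟩
  calc ‖x‖ = ‖(Ring.inverse (T a) * T a) x‖ := by rw [Ring.inverse_mul_cancel _ (hunit a ha)]; rfl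
    _ ≤ ‖Ring.inverse (T a)‖ * ‖T a x‖ := (Ring.inverse (T a)).le_opNorm _
    _ ≤ max K 0 * ‖T a x‖ := by
      gcongr
      exact (le_abs_self _).trans ((hK a ha).trans (le_max_left _ _))

section Sylvester

variable {m n : Type*} [Fintype m] [Fintype n]

noncomputable def sylvesterOp :
    (Matrix m m ℝ × Matrix n n ℝ) →ₗ[ℝ] Matrix m n ℝ →L[ℝ] Matrix m n ℝ :=
  LinearMap.toContinuousLinearMap.toLinearMap ∘ₗ
    LinearMap.mk₂ ℝ (fun GF X => GF.1 * X + X * GF.2)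
      (by intros; simp only [Prod.fst_add, Prod.snd_add, Matrix.add_mul, Matrix.mul_add]; abel)
      (by intros; simp [Matrix.smul_mul, Matrix.mul_smul])
      (by intros; simp only [Matrix.add_mul, Matrix.mul_add]; abel)
      (by intros; simp [Matrix.smul_mul, Matrix.mul_smul])

theorem sylvesterOp_apply (G : Matrix m m ℝ) (F : Matrix n n ℝ) (X : Matrix m n ℝ) :
    sylvesterOp (G, F) X = G * X + X * F := rfl

end Sylvester

theorem isUnit_sylvesterOp {a b : ℕ} {G : Matrix (Fin a) (Fin a) ℝ}
    {F : Matrix (Fin b) (Fin b) ℝ} (hG : IsStable G) (hF : IsStable F) :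
    IsUnit (sylvesterOp (G, F)) := by
  have hinj : Function.Injective (sylvesterOp (G, F)) :=
    (injective_iff_map_eq_zero _).mpr fun X hX => hG.eq_zero_of_mul_add_mul_eq_zero hF hX
  exact ContinuousLinearMap.isUnit_iff_bijective.mpr
    ⟨hinj, LinearMap.injective_iff_surjective.mp hinj⟩

section UniformBound

variable {α : Type*} {a b c : ℕ}

def SylvesterInvBound (S : Set α) (g : α → Matrix (Fin a) (Fin a) ℝ)
    (f : α → Matrix (Fin b) (Fin b) ℝ) (K : ℝ) : Prop :=
  0 ≤ K ∧ ∀ M ∈ S, ∀ X R : Matrix (Fin a) (Fin b) ℝ, g M * X + X * f M + R = 0 → ‖X‖ ≤ K * ‖R‖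

theorem exists_sylvesterInvBound [TopologicalSpace α] {S : Set α} (hS : IsCompact S)
    {g : α → Matrix (Fin a) (Fin a) ℝ} {f : α → Matrix (Fin b) (Fin b) ℝ}
    (hg : ContinuousOn g S) (hf : ContinuousOn f S) (hgS : ∀ M ∈ S, IsStable (g M))
    (hfS : ∀ M ∈ S, IsStable (f M)) : ∃ K, SylvesterInvBound S g f K := by
  obtain ⟨K, hK₀, hK⟩ := hS.exists_norm_le_mul_norm_apply
    ((LinearMap.continuous_of_finiteDimensional sylvesterOp).comp_continuousOn (hg.prodMk hf))
    fun M hM => isUnit_sylvesterOp (hgS M hM) (hfS M hM)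
  refine ⟨K, hK₀, fun M hM X R h => ?_⟩
  calc ‖X‖ ≤ K * ‖sylvesterOp (g M, f M) X‖ := hK M hM X
    _ = K * ‖R‖ := by rw [sylvesterOp_apply, eq_neg_of_add_eq_zero_left h, norm_neg]

namespace SylvesterInvBound

variable [SeminormedAddCommGroup α] {S : Set α} {K K' : ℝ} {M₁ M₂ : α}

theorem norm_sub_le {g : α → Matrix (Fin a) (Fin a) ℝ} {f : α → Matrix (Fin b) (Fin b) ℝ}
    (hK : SylvesterInvBound S g f K) (hg : LipschitzWith 1 g) (hf : LipschitzWith 1 f)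
    (hM₁ : M₁ ∈ S) (hM₂ : M₂ ∈ S) {X₁ X₂ R : Matrix (Fin a) (Fin b) ℝ}
    (h₁ : g M₁ * X₁ + X₁ * f M₁ + R = 0) (h₂ : g M₂ * X₂ + X₂ * f M₂ + R = 0) :
    ‖X₁ - X₂‖ ≤ 2 * K ^ 2 * ‖R‖ * ‖M₁ - M₂‖ := by
  have hdiff : g M₁ * (X₁ - X₂) + (X₁ - X₂) * f M₁ + ((g M₁ - g M₂) * X₂ + X₂ * (f M₁ - f M₂))
      = 0 := calc
    _ = (g M₁ * X₁ + X₁ * f M₁ + R) - (g M₂ * X₂ + X₂ * f M₂ + R) := by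
      simp only [Matrix.mul_sub, Matrix.sub_mul]; abel
    _ = 0 := by rw [h₁, h₂, sub_zero]
  have hX₂ := hK.2 M₂ hM₂ _ _ h₂
  have hK₀ := hK.1
  calc ‖X₁ - X₂‖ ≤ K * ‖(g M₁ - g M₂) * X₂ + X₂ * (f M₁ - f M₂)‖ := hK.2 M₁ hM₁ _ _ hdiff
    _ ≤ K * (‖M₁ - M₂‖ * (K * ‖R‖) + (K * ‖R‖) * ‖M₁ - M₂‖) := by
      gcongr
      refine (norm_add_le _ _).trans (add_le_add ?_ ?_)
      · exact (frobenius_norm_mul _ _).trans (by gcongr; simpa using hg.norm_sub_le M₁ M₂)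
      · exact (frobenius_norm_mul _ _).trans (by gcongr; simpa using hf.norm_sub_le M₁ M₂)
    _ = 2 * K ^ 2 * ‖R‖ * ‖M₁ - M₂‖ := by ring

theorem norm_mul_sub_mul_le {g : α → Matrix (Fin a) (Fin a) ℝ} {f : α → Matrix (Fin b) (Fin b) ℝ}
    {g' : α → Matrix (Fin b) (Fin b) ℝ} {f' : α → Matrix (Fin c) (Fin c) ℝ}
    (hK : SylvesterInvBound S g f K) (hK' : SylvesterInvBound S g' f' K')
    (hg : LipschitzWith 1 g) (hf : LipschitzWith 1 f)
    (hg' : LipschitzWith 1 g') (hf' : LipschitzWith 1 f') (hM₁ : M₁ ∈ S) (hM₂ : M₂ ∈ S)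
    {U₁ U₂ R : Matrix (Fin a) (Fin b) ℝ} {V₁ V₂ R' : Matrix (Fin b) (Fin c) ℝ}
    (hU₁ : g M₁ * U₁ + U₁ * f M₁ + R = 0) (hU₂ : g M₂ * U₂ + U₂ * f M₂ + R = 0)
    (hV₁ : g' M₁ * V₁ + V₁ * f' M₁ + R' = 0) (hV₂ : g' M₂ * V₂ + V₂ * f' M₂ + R' = 0) :
    ‖U₁ * V₁ - U₂ * V₂‖ ≤ 2 * K * K' * (K + K') * ‖R‖ * ‖R'‖ * ‖M₁ - M₂‖ := by
  have hK₀ := hK.1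
  have hK'₀ := hK'.1
  calc ‖U₁ * V₁ - U₂ * V₂‖ = ‖U₁ * (V₁ - V₂) + (U₁ - U₂) * V₂‖ := by
        rw [Matrix.mul_sub, Matrix.sub_mul, sub_add_sub_cancel]
    _ ≤ ‖U₁‖ * ‖V₁ - V₂‖ + ‖U₁ - U₂‖ * ‖V₂‖ :=
      (norm_add_le _ _).trans (add_le_add (frobenius_norm_mul _ _) (frobenius_norm_mul _ _))
    _ ≤ (K * ‖R‖) * (2 * K' ^ 2 * ‖R'‖ * ‖M₁ - M₂‖)
        + (2 * K ^ 2 * ‖R‖ * ‖M₁ - M₂‖) * (K' * ‖R'‖) := by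
      gcongr
      · exact hK.2 M₁ hM₁ _ _ hU₁
      · exact hK'.norm_sub_le hg' hf' hM₁ hM₂ hV₁ hV₂
      · exact hK.norm_sub_le hg hf hM₁ hM₂ hU₁ hU₂
      · exact hK'.2 M₂ hM₂ _ _ hV₂
    _ = 2 * K * K' * (K + K') * ‖R‖ * ‖R'‖ * ‖M₁ - M₂‖ := by ring

end SylvesterInvBound

end UniformBound

theorem gradA_lipschitz_general {n m p r : ℕ}
    (A : Matrix (Fin n) (Fin n) ℝ) (hA : IsStable A)
    (B : Matrix (Fin n) (Fin m) ℝ) (C : Matrix (Fin p) (Fin n) ℝ)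
    (S : Set (Matrix (Fin r) (Fin r) ℝ))
    (hScpt : IsCompact S) (hSstable : ∀ M ∈ S, IsStable M) :
    ∃ c₁ > (0 : ℝ), ∃ c₂ > (0 : ℝ),
      ∀ A₁ ∈ S, ∀ A₂ ∈ S,
      ∀ (B_r : Matrix (Fin r) (Fin m) ℝ) (C_r : Matrix (Fin p) (Fin r) ℝ)
        (X₁ X₂ Y₁ Y₂ : Matrix (Fin n) (Fin r) ℝ)
        (P₁ P₂ Q₁ Q₂ : Matrix (Fin r) (Fin r) ℝ),
        A * X₁ + X₁ * A₁ᵀ + B * B_rᵀ = 0 →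
        Aᵀ * Y₁ + Y₁ * A₁ - Cᵀ * C_r = 0 →
        A₁ * P₁ + P₁ * A₁ᵀ + B_r * B_rᵀ = 0 →
        A₁ᵀ * Q₁ + Q₁ * A₁ + C_rᵀ * C_r = 0 →
        A * X₂ + X₂ * A₂ᵀ + B * B_rᵀ = 0 →
        Aᵀ * Y₂ + Y₂ * A₂ - Cᵀ * C_r = 0 →
        A₂ * P₂ + P₂ * A₂ᵀ + B_r * B_rᵀ = 0 →
        A₂ᵀ * Q₂ + Q₂ * A₂ + C_rᵀ * C_r = 0 →
        frobNorm ((Q₁ * P₁ + Y₁ᵀ * X₁) - (Q₂ * P₂ + Y₂ᵀ * X₂)) ≤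
          (c₁ + c₂ * frobNorm B_r * frobNorm C_r) *
            frobNorm B_r * frobNorm C_r * frobNorm (A₁ - A₂) := by
  have hSstable' M hM := (hSstable M hM).transpose
  have hT := lipschitzWith_transpose (m := Fin r) (n := Fin r)
  have hTS := hT.continuous.continuousOn (s := S)
  obtain ⟨KX, hKX⟩ := exists_sylvesterInvBound hScpt continuousOn_const hTS (fun _ _ => hA)
    hSstable'
  obtain ⟨KY, hKY⟩ := exists_sylvesterInvBound hScpt hTS continuousOn_const hSstable'
    (fun _ _ => hA)
  obtain ⟨KP, hKP⟩ := exists_sylvesterInvBound hScpt continuousOn_id hTS hSstable hSstable'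
  obtain ⟨KQ, hKQ⟩ := exists_sylvesterInvBound hScpt hTS continuousOn_id hSstable' hSstable
  let cYX := 2 * KY * KX * (KY + KX)
  let cQP := 2 * KQ * KP * (KQ + KP)
  refine ⟨max (cYX * (‖B‖ * ‖C‖)) 1, by positivity, max cQP 1, by positivity, ?_⟩
  intro A₁ hA₁ A₂ hA₂ B_r C_r X₁ X₂ Y₁ Y₂ P₁ P₂ Q₁ Q₂ hX₁ hY₁ hP₁ hQ₁ hX₂ hY₂ hP₂ hQ₂
  have hQP := hKQ.norm_mul_sub_mul_le hKP hT LipschitzWith.id LipschitzWith.id hT hA₁ hA₂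
    hQ₁ hQ₂ hP₁ hP₂
  have hYX := hKY.norm_mul_sub_mul_le hKX hT (LipschitzWith.const' A) (LipschitzWith.const' A) hT
    hA₁ hA₂ (transpose_sylvester_eq_zero hY₁) (transpose_sylvester_eq_zero hY₂) hX₁ hX₂
  simp only [frobNorm_eq_norm]
  calc ‖(Q₁ * P₁ + Y₁ᵀ * X₁) - (Q₂ * P₂ + Y₂ᵀ * X₂)‖
      ≤ ‖Q₁ * P₁ - Q₂ * P₂‖ + ‖Y₁ᵀ * X₁ - Y₂ᵀ * X₂‖ := by
        rw [add_sub_add_comm]; exact norm_add_le _ _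
    _ ≤ cQP * (‖C_r‖ * ‖C_r‖) * (‖B_r‖ * ‖B_r‖) * ‖A₁ - A₂‖
        + cYX * (‖C‖ * ‖C_r‖) * (‖B‖ * ‖B_r‖) * ‖A₁ - A₂‖ := by
      have := hKQ.1; have := hKP.1; have := hKY.1; have := hKX.1
      refine add_le_add (hQP.trans ?_) (hYX.trans ?_) <;> gcongr
      · exact frobenius_norm_transpose_mul_le _ _
      · exact frobenius_norm_mul_transpose_le _ _
      · rw [norm_neg, frobenius_norm_transpose]; exact frobenius_norm_transpose_mul_le _ _
      · exact frobenius_norm_mul_transpose_le _ _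
    _ = (cYX * (‖B‖ * ‖C‖) + cQP * ‖B_r‖ * ‖C_r‖) * ‖B_r‖ * ‖C_r‖ * ‖A₁ - A₂‖ := by ring
    _ ≤ _ := by gcongr <;> exact le_max_left _ _

/-- Lipschitz continuity (with block Lipschitz constant
`(c₁ + c₂ ‖B_r‖_F ‖C_r‖_F) ‖B_r‖_F ‖C_r‖_F`) of the gradient `Q P + Yᵀ X`
with respect to `A_r` over a compact set `S` of stable matrices. -/
theorem gradA_lipschitz {n m p r : ℕ}
    (A : Matrix (Fin n) (Fin n) ℝ) (hA : IsStable A)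
    (B : Matrix (Fin n) (Fin m) ℝ) (C : Matrix (Fin p) (Fin n) ℝ)
    (S : Set (Matrix (Fin r) (Fin r) ℝ)) (hSne : S.Nonempty)
    (hScpt : IsCompact S) (hSstable : ∀ M ∈ S, IsStable M) :
    ∃ c₁ > (0 : ℝ), ∃ c₂ > (0 : ℝ),
      ∀ A₁ ∈ S, ∀ A₂ ∈ S,
      ∀ (B_r : Matrix (Fin r) (Fin m) ℝ) (C_r : Matrix (Fin p) (Fin r) ℝ)
        (X₁ X₂ Y₁ Y₂ : Matrix (Fin n) (Fin r) ℝ)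
        (P₁ P₂ Q₁ Q₂ : Matrix (Fin r) (Fin r) ℝ),
        A * X₁ + X₁ * A₁ᵀ + B * B_rᵀ = 0 →
        Aᵀ * Y₁ + Y₁ * A₁ - Cᵀ * C_r = 0 →
        A₁ * P₁ + P₁ * A₁ᵀ + B_r * B_rᵀ = 0 →
        A₁ᵀ * Q₁ + Q₁ * A₁ + C_rᵀ * C_r = 0 →
        A * X₂ + X₂ * A₂ᵀ + B * B_rᵀ = 0 →
        Aᵀ * Y₂ + Y₂ * A₂ - Cᵀ * C_r = 0 →
        A₂ * P₂ + P₂ * A₂ᵀ + B_r * B_rᵀ = 0 →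
        A₂ᵀ * Q₂ + Q₂ * A₂ + C_rᵀ * C_r = 0 →
        frobNorm ((Q₁ * P₁ + Y₁ᵀ * X₁) - (Q₂ * P₂ + Y₂ᵀ * X₂)) ≤
          (c₁ + c₂ * frobNorm B_r * frobNorm C_r) *
            frobNorm B_r * frobNorm C_r * frobNorm (A₁ - A₂) :=
  gradA_lipschitz_general A hA B C S hScpt hSstable
end

section
/- Let A ∈ ℝ^{n×n}, A_r ∈ ℝ^{r×r}, B ∈ ℝ^{n×m}, B_r ∈ ℝ^{r×m}, C ∈ ℝ^{p×n}, C_r ∈ ℝ^{p×r}, and suppose X, Y ∈ ℝ^{n×r} and P, Q ∈ ℝ^{r×r} satisfy the equations A X + X A_rᵀ + B B_rᵀ = 0, Aᵀ Y + Y A_r − Cᵀ C_r = 0, A_r P + P A_rᵀ + B_r B_rᵀ = 0, and A_rᵀ Q + Q A_r + C_rᵀ C_r = 0. Then tr(C_r P C_rᵀ − 2 C_r Xᵀ Cᵀ) = tr(B_rᵀ Q B_r + 2 Bᵀ Y B_r). -/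
open Matrix

/-- the two trace expressions of the H² model-reduction objective
agree: `tr(C_r P C_rᵀ − 2 C_r Xᵀ Cᵀ) = tr(B_rᵀ Q B_r + 2 Bᵀ Y B_r)`. -/
theorem h2_objective_two_forms {n m p r : ℕ}
    (A : Matrix (Fin n) (Fin n) ℝ) (A_r : Matrix (Fin r) (Fin r) ℝ)
    (B : Matrix (Fin n) (Fin m) ℝ) (B_r : Matrix (Fin r) (Fin m) ℝ)
    (C : Matrix (Fin p) (Fin n) ℝ) (C_r : Matrix (Fin p) (Fin r) ℝ)
    (X Y : Matrix (Fin n) (Fin r) ℝ) (P Q : Matrix (Fin r) (Fin r) ℝ)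
    (hX : A * X + X * A_rᵀ + B * B_rᵀ = 0)
    (hY : Aᵀ * Y + Y * A_r - Cᵀ * C_r = 0)
    (hP : A_r * P + P * A_rᵀ + B_r * B_rᵀ = 0)
    (hQ : A_rᵀ * Q + Q * A_r + C_rᵀ * C_r = 0) :
    Matrix.trace (C_r * P * C_rᵀ - (2 : ℝ) • (C_r * Xᵀ * Cᵀ)) =
      Matrix.trace (B_rᵀ * Q * B_r + (2 : ℝ) • (Bᵀ * Y * B_r)) := by
  have hQ' : C_rᵀ * C_r = -(A_rᵀ * Q + Q * A_r) :=
    eq_neg_of_add_eq_zero_right hQ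
  have hP' : P * A_rᵀ + A_r * P = -(B_r * B_rᵀ) := by
    rw [eq_neg_of_add_eq_zero_right hP]; abel
  have hX' : Xᵀ * Aᵀ + A_r * Xᵀ = -(B_r * Bᵀ) := by
    have h := eq_neg_of_add_eq_zero_right hX
    have := congrArg Matrix.transpose h
    simp only [transpose_add, transpose_mul, transpose_transpose,
      transpose_neg] at this
    rw [this]; abel
  have hY' : Cᵀ * C_r = Aᵀ * Y + Y * A_r := (sub_eq_zero.mp hY).symm
  have t1 : trace (C_r * P * C_rᵀ) = trace (B_rᵀ * Q * B_r) := by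
    calc trace (C_r * P * C_rᵀ) = trace (C_rᵀ * C_r * P) := by
          rw [trace_mul_cycle]
      _ = trace (-(A_rᵀ * Q + Q * A_r) * P) := by rw [hQ']
      _ = -(trace (A_rᵀ * Q * P) + trace (Q * A_r * P)) := by
          simp [add_mul]
      _ = -(trace (Q * P * A_rᵀ) + trace (Q * A_r * P)) := by
          rw [show trace (A_rᵀ * Q * P) = trace (Q * P * A_rᵀ) from
            (trace_mul_cycle Q P A_rᵀ).symm]
      _ = -trace (Q * (P * A_rᵀ + A_r * P)) := by
          rw [Matrix.mul_add, trace_add, Matrix.mul_assoc, Matrix.mul_assoc]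
      _ = trace (Q * (B_r * B_rᵀ)) := by rw [hP', mul_neg, trace_neg, neg_neg]
      _ = trace (B_rᵀ * Q * B_r) := by rw [← Matrix.mul_assoc, trace_mul_cycle]
  have t2 : trace (C_r * Xᵀ * Cᵀ) = -trace (Bᵀ * Y * B_r) := by
    calc trace (C_r * Xᵀ * Cᵀ) = trace (Cᵀ * C_r * Xᵀ) := by
          rw [trace_mul_cycle]
      _ = trace (Aᵀ * Y * Xᵀ) + trace (Y * A_r * Xᵀ) := by
          rw [hY', Matrix.add_mul, trace_add]
      _ = trace (Y * Xᵀ * Aᵀ) + trace (Y * A_r * Xᵀ) := by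
          rw [show trace (Aᵀ * Y * Xᵀ) = trace (Y * Xᵀ * Aᵀ) from
            (trace_mul_cycle Y Xᵀ Aᵀ).symm]
      _ = trace (Y * (Xᵀ * Aᵀ + A_r * Xᵀ)) := by
          rw [Matrix.mul_add, trace_add, Matrix.mul_assoc, Matrix.mul_assoc]
      _ = -trace (Y * (B_r * Bᵀ)) := by rw [hX', Matrix.mul_neg, trace_neg]
      _ = -trace (Bᵀ * Y * B_r) := by rw [← Matrix.mul_assoc, trace_mul_cycle]
  rw [trace_sub, trace_add, trace_smul, trace_smul, t1, t2, smul_neg,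
    sub_neg_eq_add]
end
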